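/- arXiv:2306.00713 — 6 statements merged into one kernel-verified Lean document; each statement's English description precedes it below -/
import Mathlib

section
/- Let d, c > 0 and let g : ℝ → ℝ be continuous with the sign condition g(v)(v - μ) < 0 for all v ≥ 0, v ≠ μ, where μ > 0 (here g(v) = G(0,v)). Consider the planar system ψ' = χ, d χ' = cχ - ψ g(ψ). If (ψ, χ)(z₀) lies in A₁ = {ψ > μ, χ > 0} for some z₀, then ψ(z) → +∞ as z → +∞; in particular ψ is unbounded. -/
/-!
In `A₁ = {ψ > μ, χ > 0}` the sign condition gives `ψ g(ψ) < 0`, so `dχ' = cχ - ψ g(ψ) > 0`: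
both coordinates strictly increase there, hence a trajectory can never reach the boundary of `A₁`
(at a first exit time both coordinates would exceed their initial values). Once `A₁` is forward
invariant, `χ ≥ χ(z₀) > 0` for `z ≥ z₀`, so `ψ` grows at least linearly.
-/

open Filter Set

lemma strictMonoOn_of_hasDerivAt_pos {f f' : ℝ → ℝ} {D : Set ℝ} (hD : Convex ℝ D)
    (hf : ∀ x, HasDerivAt f (f' x) x) (hpos : ∀ x ∈ interior D, 0 < f' x) :
    StrictMonoOn f D :=
  strictMonoOn_of_hasDerivWithinAt_pos hD (fun x _ => (hf x).continuousAt.continuousWithinAt)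
    (fun x _ => (hf x).hasDerivWithinAt) hpos

lemma tendsto_atTop_of_hasDerivAt_ge {f f' : ℝ → ℝ} {a C : ℝ} (hC : 0 < C)
    (hf : ∀ x, HasDerivAt f (f' x) x) (hf' : ∀ x, a ≤ x → C ≤ f' x) :
    Tendsto f atTop atTop := by
  have hlinear : ∀ x, a ≤ x → f a + C * (x - a) ≤ f x := by
    intro x hx
    have := (convex_Ici a).mul_sub_le_image_sub_of_le_deriv
      (fun y _ => (hf y).continuousAt.continuousWithinAt)
      (fun y _ => (hf y).differentiableAt.differentiableWithinAt)
      (fun y hy => (hf y).deriv ▸ hf' y (interior_subset hy)) a self_mem_Ici x hx hx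
    linarith
  have hlinear_tendsto : Tendsto (fun x => f a + C * (x - a)) atTop atTop :=
    tendsto_atTop_add_const_left _ _
      ((tendsto_atTop_add_const_right _ _ tendsto_id).const_mul_atTop hC)
  exact tendsto_atTop_mono' atTop (eventually_atTop.mpr ⟨a, hlinear⟩) hlinear_tendsto

theorem Continuous.mapsTo_Ici_of_forall_mapsTo_Ico {X : Type*} [TopologicalSpace X]
    {γ : ℝ → X} (hγ : Continuous γ) {U : Set X} (hU : IsOpen U) {a : ℝ} (ha : γ a ∈ U)
    (hexit : ∀ b, a < b → MapsTo γ (Ico a b) U → γ b ∈ U) : MapsTo γ (Ici a) U := by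
  intro z hz
  by_contra hzU
  have hclosed : IsClosed (Ici a ∩ γ ⁻¹' Uᶜ) := isClosed_Ici.inter (hU.isClosed_compl.preimage hγ)
  obtain ⟨⟨ha_le, hexit_notMem⟩, hleast⟩ := hclosed.isLeast_csInf ⟨z, hz, hzU⟩ ⟨a, fun _ h => h.1⟩
  have ha_lt : a < sInf (Ici a ∩ γ ⁻¹' Uᶜ) :=
    ha_le.lt_of_ne fun h => hexit_notMem (h ▸ ha)
  exact hexit_notMem <| hexit _ ha_lt fun t ht =>
    by_contra fun htU => ht.2.not_ge (hleast ⟨ht.1, htU⟩)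

section TravelingWave

variable {d c μ : ℝ} {g ψ χ : ℝ → ℝ}

lemma travelingWave_accel_pos (hd : 0 < d) (hc : 0 < c) (hμ : 0 < μ)
    (hsign : ∀ v, 0 ≤ v → v ≠ μ → g v * (v - μ) < 0) {v w : ℝ} (hv : μ < v) (hw : 0 < w) :
    0 < (c * w - v * g v) / d := by
  have hgv : g v < 0 := by
    have := hsign v (hμ.trans hv).le hv.ne'
    nlinarith
  have : 0 < c * w - v * g v := by
    nlinarith [mul_pos hc hw, mul_neg_of_pos_of_neg (hμ.trans hv) hgv]
  positivity

theorem travelingWave_mapsTo_A₁ (hd : 0 < d) (hc : 0 < c) (hμ : 0 < μ)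
    (hsign : ∀ v, 0 ≤ v → v ≠ μ → g v * (v - μ) < 0)
    (hψ : ∀ z, HasDerivAt ψ (χ z) z)
    (hχ : ∀ z, HasDerivAt χ ((c * χ z - ψ z * g (ψ z)) / d) z)
    {z₀ : ℝ} (h₁ : μ < ψ z₀) (h₂ : 0 < χ z₀) :
    MapsTo (fun z => (ψ z, χ z)) (Ici z₀) (Ioi μ ×ˢ Ioi 0) := by
  have hcont : Continuous fun z => (ψ z, χ z) :=
    (continuous_iff_continuousAt.2 fun z => (hψ z).continuousAt).prodMk
      (continuous_iff_continuousAt.2 fun z => (hχ z).continuousAt)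
  refine hcont.mapsTo_Ici_of_forall_mapsTo_Ico (isOpen_Ioi.prod isOpen_Ioi) ⟨h₁, h₂⟩ ?_
  intro T hT hstay
  have hinside : ∀ z ∈ interior (Icc z₀ T), μ < ψ z ∧ 0 < χ z := by
    rw [interior_Icc]
    exact fun z hz => hstay ⟨hz.1.le, hz.2⟩
  have hψT : ψ z₀ < ψ T :=
    strictMonoOn_of_hasDerivAt_pos (convex_Icc z₀ T) hψ (fun z hz => (hinside z hz).2)
      (left_mem_Icc.2 hT.le) (right_mem_Icc.2 hT.le) hT
  have hχT : χ z₀ < χ T :=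
    strictMonoOn_of_hasDerivAt_pos (convex_Icc z₀ T) hχ
      (fun z hz => travelingWave_accel_pos hd hc hμ hsign (hinside z hz).1 (hinside z hz).2)
      (left_mem_Icc.2 hT.le) (right_mem_Icc.2 hT.le) hT
  exact ⟨h₁.trans hψT, h₂.trans hχT⟩

end TravelingWave

theorem stmt7_general (d c μ : ℝ) (hd : 0 < d) (hc : 0 < c) (hμ : 0 < μ)
    (g : ℝ → ℝ)
    (hsign : ∀ v, 0 ≤ v → v ≠ μ → g v * (v - μ) < 0)
    (ψ χ : ℝ → ℝ)
    (hψ : ∀ z, HasDerivAt ψ (χ z) z)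
    (hχ : ∀ z, HasDerivAt χ ((c * χ z - ψ z * g (ψ z)) / d) z)
    (z₀ : ℝ) (h₁ : μ < ψ z₀) (h₂ : 0 < χ z₀) :
    Filter.Tendsto ψ Filter.atTop Filter.atTop := by
  have hA₁ := travelingWave_mapsTo_A₁ hd hc hμ hsign hψ hχ h₁ h₂
  have hχ_mono : MonotoneOn χ (Ici z₀) :=
    (strictMonoOn_of_hasDerivAt_pos (convex_Ici z₀) hχ fun z hz =>
      travelingWave_accel_pos hd hc hμ hsign (hA₁ (interior_subset hz)).1
        (hA₁ (interior_subset hz)).2).monotoneOn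
  exact tendsto_atTop_of_hasDerivAt_ge h₂ hψ fun z hz => hχ_mono self_mem_Ici hz hz

/-- If a trajectory of `ψ' = χ`, `dχ' = cχ - ψ g(ψ)` enters the region
`A₁ = {ψ > μ, χ > 0}`, then `ψ(z) → +∞` as `z → +∞`. -/
theorem stmt7 (d c μ : ℝ) (hd : 0 < d) (hc : 0 < c) (hμ : 0 < μ)
    (g : ℝ → ℝ) (hg : Continuous g)
    (hsign : ∀ v, 0 ≤ v → v ≠ μ → g v * (v - μ) < 0)
    (ψ χ : ℝ → ℝ)
    (hψ : ∀ z, HasDerivAt ψ (χ z) z)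
    (hχ : ∀ z, HasDerivAt χ ((c * χ z - ψ z * g (ψ z)) / d) z)
    (z₀ : ℝ) (h₁ : μ < ψ z₀) (h₂ : 0 < χ z₀) :
    Filter.Tendsto ψ Filter.atTop Filter.atTop :=
  stmt7_general d c μ hd hc hμ g hsign ψ χ hψ hχ z₀ h₁ h₂
end

section
/- Let d, c > 0, v₀ > μ > 0, and g : [0, v₀] → ℝ continuous with g(v)(v - μ) < 0 for v ∈ [0,μ) ∪ (μ, v₀]. Suppose (ψ, χ) : ℝ → ℝ² is a globally defined bounded solution of ψ' = χ, dχ' = cχ - ψ g(ψ) with 0 < ψ(z) ≤ v₀ for all z. If there exists z₀ with ψ(z₀) > μ and χ(z₀) ≥ 0, then ψ is unbounded — a contradiction. Hence no point of the trajectory lies in {ψ > μ, χ ≥ 0} ∪ {ψ = μ, χ > 0}. -/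
/-!
Whenever `ψ > μ` and `χ ≥ 0`, the sign condition on `g` makes `χ' > 0`. Hence a trajectory
meeting `{ψ > μ, χ ≥ 0} ∪ {ψ = μ, χ > 0}` enters `{ψ > μ, χ > 0}` immediately afterwards, and
from a point `z₁` of that region both `ψ` and `χ` keep increasing (continuous induction). Then
`ψ' = χ ≥ χ z₁ > 0` for all later times, so `ψ` tends to `+∞`, contradicting `ψ ≤ v₀`.
-/

open Set Filter Topology

lemma HasDerivAt.eventually_lt_nhdsGT {f : ℝ → ℝ} {f' x : ℝ} (hf : HasDerivAt f f' x)
    (hf' : 0 < f') : ∀ᶠ y in 𝓝[>] x, f x < f y := by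
  have hslope : ∀ᶠ y in 𝓝[>] x, 0 < slope f x y :=
    ((hasDerivAt_iff_tendsto_slope.mp hf).mono_left (nhdsGT_le_nhdsNE x)).eventually
      (Ioi_mem_nhds hf')
  filter_upwards [hslope, self_mem_nhdsWithin] with y hy hxy
  exact (slope_pos_iff_of_le (le_of_lt hxy)).mp hy

lemma tendsto_atTop_of_le_deriv {f f' : ℝ → ℝ} (hf : ∀ z, HasDerivAt f (f' z) z) {a ε : ℝ}
    (hε : 0 < ε) (hf' : ∀ z, a ≤ z → ε ≤ f' z) : Tendsto f atTop atTop := by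
  have hlin : ∀ z ∈ Ici a, ε * (z - a) ≤ f z - f a :=
    fun z hz ↦ (convex_Ici a).mul_sub_le_image_sub_of_le_deriv
      (fun x _ ↦ (hf x).continuousAt.continuousWithinAt)
      (fun x _ ↦ (hf x).differentiableAt.differentiableWithinAt)
      (fun x hx ↦ (hf x).deriv ▸ hf' x (interior_subset hx)) a self_mem_Ici z hz hz
  refine tendsto_atTop_mono' atTop ?_ (tendsto_atTop_add_const_right _ (f a)
    ((tendsto_atTop_add_const_right _ (-a) tendsto_id).const_mul_atTop hε))
  filter_upwards [eventually_ge_atTop a] with z hz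
  simpa [sub_eq_add_neg] using hlin z hz

section Trajectory

variable {ψ χ χ' : ℝ → ℝ} {μ : ℝ}

lemma eventually_lt_and_pos_nhdsGT (hψ : ∀ z, HasDerivAt ψ (χ z) z)
    (hχ : ∀ z, HasDerivAt χ (χ' z) z) (hχ' : ∀ z, μ < ψ z → 0 ≤ χ z → 0 < χ' z) {z : ℝ}
    (hz : (μ < ψ z ∧ 0 ≤ χ z) ∨ (ψ z = μ ∧ 0 < χ z)) :
    ∀ᶠ y in 𝓝[>] z, μ < ψ y ∧ 0 < χ y := by
  rcases hz with ⟨hψz, hχz⟩ | ⟨hψz, hχz⟩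
  · filter_upwards [nhdsWithin_le_nhds ((hψ z).continuousAt.eventually (lt_mem_nhds hψz)),
      (hχ z).eventually_lt_nhdsGT (hχ' z hψz hχz)] with y hψy hχy
    exact ⟨hψy, hχz.trans_lt hχy⟩
  · filter_upwards [(hψ z).eventually_lt_nhdsGT hχz,
      nhdsWithin_le_nhds ((hχ z).continuousAt.eventually (lt_mem_nhds hχz))] with y hψy hχy
    exact ⟨hψz ▸ hψy, hχy⟩

lemma forward_le_of_lt_of_pos (hψ : ∀ z, HasDerivAt ψ (χ z) z)
    (hχ : ∀ z, HasDerivAt χ (χ' z) z) (hχ' : ∀ z, μ < ψ z → 0 ≤ χ z → 0 < χ' z) {z₁ : ℝ}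
    (hψ₁ : μ < ψ z₁) (hχ₁ : 0 < χ z₁) {z : ℝ} (hz : z₁ ≤ z) :
    ψ z₁ ≤ ψ z ∧ χ z₁ ≤ χ z := by
  set s := {y | ψ z₁ ≤ ψ y ∧ χ z₁ ≤ χ y}
  have hs : IsClosed s :=
    (isClosed_le continuous_const (continuous_iff_continuousAt.2 fun y ↦ (hψ y).continuousAt)).inter
      (isClosed_le continuous_const (continuous_iff_continuousAt.2 fun y ↦ (hχ y).continuousAt))
  refine (hs.inter isClosed_Icc).Icc_subset_of_forall_mem_nhdsWithin ⟨le_rfl, le_rfl⟩ ?_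
    ⟨hz, le_rfl⟩
  rintro x ⟨⟨hψx, hχx⟩, -⟩
  have hχpos : 0 < χ x := hχ₁.trans_le hχx
  filter_upwards [(hψ x).eventually_lt_nhdsGT hχpos,
    (hχ x).eventually_lt_nhdsGT (hχ' x (hψ₁.trans_le hψx) hχpos.le)] with y hψy hχy
  exact ⟨hψx.trans hψy.le, hχx.trans hχy.le⟩

lemma tendsto_atTop_of_lt_of_pos (hψ : ∀ z, HasDerivAt ψ (χ z) z)
    (hχ : ∀ z, HasDerivAt χ (χ' z) z) (hχ' : ∀ z, μ < ψ z → 0 ≤ χ z → 0 < χ' z) {z₁ : ℝ}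
    (hψ₁ : μ < ψ z₁) (hχ₁ : 0 < χ z₁) : Tendsto ψ atTop atTop :=
  tendsto_atTop_of_le_deriv hψ hχ₁ fun _ hz ↦ (forward_le_of_lt_of_pos hψ hχ hχ' hψ₁ hχ₁ hz).2

end Trajectory

theorem stmt9_general (d c μ v₀ : ℝ) (hd : 0 < d) (hc : 0 < c)
    (g : ℝ → ℝ)
    (hsign : ∀ v ∈ Set.Icc (0 : ℝ) v₀, v ≠ μ → g v * (v - μ) < 0)
    (ψ χ : ℝ → ℝ)
    (hψ : ∀ z, HasDerivAt ψ (χ z) z)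
    (hχ : ∀ z, HasDerivAt χ ((c * χ z - ψ z * g (ψ z)) / d) z)
    (hbd : ∀ z, 0 < ψ z ∧ ψ z ≤ v₀) :
    ∀ z, ¬ ((μ < ψ z ∧ 0 ≤ χ z) ∨ (ψ z = μ ∧ 0 < χ z)) := by
  have hχ' : ∀ z, μ < ψ z → 0 ≤ χ z → 0 < (c * χ z - ψ z * g (ψ z)) / d := by
    intro z hψz hχz
    have hg : g (ψ z) < 0 :=
      neg_of_mul_neg_left (hsign _ ⟨(hbd z).1.le, (hbd z).2⟩ hψz.ne') (sub_pos.2 hψz).le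
    have : 0 < c * χ z - ψ z * g (ψ z) := by
      nlinarith [mul_nonneg hc.le hχz, mul_neg_of_pos_of_neg (hbd z).1 hg]
    exact div_pos this hd
  intro z hz
  obtain ⟨z₁, hψ₁, hχ₁⟩ := (eventually_lt_and_pos_nhdsGT hψ hχ hχ' hz).exists
  obtain ⟨z₂, hz₂⟩ :=
    ((tendsto_atTop_of_lt_of_pos hψ hχ hχ' hψ₁ hχ₁).eventually_gt_atTop v₀).exists
  exact (hbd z₂).2.not_gt hz₂

/-- A globally defined trajectory with `0 < ψ ≤ v₀` never lies in
`{ψ > μ, χ ≥ 0} ∪ {ψ = μ, χ > 0}`. -/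
theorem stmt9 (d c μ v₀ : ℝ) (hd : 0 < d) (hc : 0 < c) (hμ : 0 < μ) (hv₀ : μ < v₀)
    (g : ℝ → ℝ) (hg : ContinuousOn g (Set.Icc 0 v₀))
    (hsign : ∀ v ∈ Set.Icc (0 : ℝ) v₀, v ≠ μ → g v * (v - μ) < 0)
    (ψ χ : ℝ → ℝ)
    (hψ : ∀ z, HasDerivAt ψ (χ z) z)
    (hχ : ∀ z, HasDerivAt χ ((c * χ z - ψ z * g (ψ z)) / d) z)
    (hbd : ∀ z, 0 < ψ z ∧ ψ z ≤ v₀) :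
    ∀ z, ¬ ((μ < ψ z ∧ 0 ≤ χ z) ∨ (ψ z = μ ∧ 0 < χ z)) :=
  stmt9_general d c μ v₀ hd hc g hsign ψ χ hψ hχ hbd
end

section
/- Let d, c > 0, v₀ > 0, g continuous on [0, v₀]. Suppose (ψ, χ) solves ψ' = χ, dχ' = cχ - ψ g(ψ) on all of ℝ with 0 < ψ(z) ≤ v₀ for all z. Define θ₊ = max_{η∈[0,v₀]} η g(η)/c and θ₋ = min_{η∈[0,v₀]} η g(η)/c. Then θ₋ ≤ χ(z) ≤ θ₊ for all z ∈ ℝ. -/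
/-!
If `χ(z₀) > θ₊`, the differential inequality `χ' ≥ (c/d)(χ - θ₊)`
(which follows from `ψ g(ψ) ≤ c θ₊`) forces `χ - θ₊` to grow at least like `e^{(c/d) z}`;
then `ψ' = χ` makes `ψ` unbounded, contradicting `ψ ≤ v₀`. The lower bound is
the same argument applied to `-ψ, -χ`.
-/

open Filter Set

section DifferentialInequality

variable {k θ : ℝ} {ψ χ χ' : ℝ → ℝ}

theorem monotone_exp_neg_mul_mul_sub (hχ : ∀ z, HasDerivAt χ (χ' z) z)
    (hineq : ∀ z, k * (χ z - θ) ≤ χ' z) :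
    Monotone fun z => Real.exp (-(k * z)) * (χ z - θ) := by
  have hF : ∀ z, HasDerivAt (fun z => Real.exp (-(k * z)) * (χ z - θ))
      (Real.exp (-(k * z)) * (χ' z - k * (χ z - θ))) z := by
    intro z
    have hexp : HasDerivAt (fun z => Real.exp (-(k * z))) (-k * Real.exp (-(k * z))) z := by
      simpa [mul_comm] using ((hasDerivAt_id z).const_mul k).neg.exp
    exact (hexp.mul ((hχ z).sub_const θ)).congr_deriv (by ring)
  refine monotone_of_deriv_nonneg (fun z => (hF z).differentiableAt) fun z => ?_
  rw [(hF z).deriv]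
  exact mul_nonneg (Real.exp_pos _).le (sub_nonneg.2 (hineq z))

theorem sub_mul_exp_le_sub (hχ : ∀ z, HasDerivAt χ (χ' z) z)
    (hineq : ∀ z, k * (χ z - θ) ≤ χ' z) {z₀ z : ℝ} (hz : z₀ ≤ z) :
    (χ z₀ - θ) * Real.exp (k * (z - z₀)) ≤ χ z - θ := by
  have hmono := monotone_exp_neg_mul_mul_sub hχ hineq hz
  have hsplit : Real.exp (k * (z - z₀)) = Real.exp (-(k * z₀)) / Real.exp (-(k * z)) := by
    rw [← Real.exp_sub]; congr 1; ring
  rw [hsplit, mul_div_assoc', div_le_iff₀ (Real.exp_pos _)]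
  linarith

theorem tendsto_atTop_of_mul_sub_le_deriv (hk : 0 < k) (hχ : ∀ z, HasDerivAt χ (χ' z) z)
    (hineq : ∀ z, k * (χ z - θ) ≤ χ' z) {z₀ : ℝ} (hz₀ : θ < χ z₀) :
    Tendsto χ atTop atTop := by
  have hexp : Tendsto (fun z => θ + (χ z₀ - θ) * Real.exp (k * (z - z₀))) atTop atTop :=
    tendsto_atTop_add_const_left _ θ <| Tendsto.const_mul_atTop (sub_pos.2 hz₀) <|
      Real.tendsto_exp_atTop.comp <| (tendsto_id.atTop_add tendsto_const_nhds).const_mul_atTop hk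
  refine tendsto_atTop_mono' atTop ?_ hexp
  filter_upwards [eventually_ge_atTop z₀] with z hz
  linarith [sub_mul_exp_le_sub hχ hineq hz]

theorem tendsto_atTop_of_hasDerivAt_of_eventually_le {C : ℝ} (hC : 0 < C)
    (hψ : ∀ z, HasDerivAt ψ (χ z) z) (hχ : ∀ᶠ z in atTop, C ≤ χ z) :
    Tendsto ψ atTop atTop := by
  obtain ⟨a, ha⟩ := eventually_atTop.1 hχ
  have hgrowth : ∀ z ∈ Ici a, C * (z - a) ≤ ψ z - ψ a := fun z hz =>
    (convex_Ici a).mul_sub_le_image_sub_of_le_deriv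
      (fun w _ => (hψ w).continuousAt.continuousWithinAt)
      (fun w _ => (hψ w).differentiableAt.differentiableWithinAt)
      (fun w hw => (hψ w).deriv ▸ ha w (interior_subset hw)) a self_mem_Ici z hz hz
  have hlin : Tendsto (fun z => ψ a + C * (z - a)) atTop atTop :=
    tendsto_atTop_add_const_left _ _ <|
      (tendsto_id.atTop_add tendsto_const_nhds).const_mul_atTop hC
  refine tendsto_atTop_mono' atTop ?_ hlin
  filter_upwards [eventually_ge_atTop a] with z hz
  linarith [hgrowth z hz]

theorem le_of_mul_sub_le_deriv_of_bddAbove (hk : 0 < k) (hψ : ∀ z, HasDerivAt ψ (χ z) z)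
    (hχ : ∀ z, HasDerivAt χ (χ' z) z) (hineq : ∀ z, k * (χ z - θ) ≤ χ' z)
    (hbdd : BddAbove (range ψ)) (z : ℝ) : χ z ≤ θ := by
  by_contra! hz
  have hχ_top := tendsto_atTop_of_mul_sub_le_deriv hk hχ hineq hz
  exact not_bddAbove_of_tendsto_atTop
    (tendsto_atTop_of_hasDerivAt_of_eventually_le one_pos hψ (hχ_top.eventually_ge_atTop 1)) hbdd

theorem le_of_deriv_le_mul_sub_of_bddBelow (hk : 0 < k) (hψ : ∀ z, HasDerivAt ψ (χ z) z)
    (hχ : ∀ z, HasDerivAt χ (χ' z) z) (hineq : ∀ z, χ' z ≤ k * (χ z - θ))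
    (hbdd : BddBelow (range ψ)) (z : ℝ) : θ ≤ χ z := by
  have := le_of_mul_sub_le_deriv_of_bddAbove (θ := -θ) (χ' := fun z => -χ' z) hk
    (fun z => (hψ z).neg) (fun z => (hχ z).neg) (fun z => by linarith [hineq z]) ?_ z
  · linarith
  obtain ⟨m, hm⟩ := hbdd
  exact ⟨-m, by rintro _ ⟨w, rfl⟩; exact neg_le_neg (hm (mem_range_self w))⟩

end DifferentialInequality

theorem stmt10_general (d c v₀ : ℝ) (hd : 0 < d) (hc : 0 < c)
    (g : ℝ → ℝ) (hg : ContinuousOn g (Set.Icc 0 v₀))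
    (ψ χ : ℝ → ℝ)
    (hψ : ∀ z, HasDerivAt ψ (χ z) z)
    (hχ : ∀ z, HasDerivAt χ ((c * χ z - ψ z * g (ψ z)) / d) z)
    (hbd : ∀ z, 0 < ψ z ∧ ψ z ≤ v₀)
    (θp θm : ℝ)
    (hθp : θp = sSup ((fun η => η * g η / c) '' Set.Icc 0 v₀))
    (hθm : θm = sInf ((fun η => η * g η / c) '' Set.Icc 0 v₀)) :
    ∀ z, θm ≤ χ z ∧ χ z ≤ θp := by
  have hK : IsCompact ((fun η => η * g η / c) '' Set.Icc 0 v₀) :=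
    isCompact_Icc.image_of_continuousOn ((continuousOn_id.mul hg).div_const c)
  have hmem z : ψ z * g (ψ z) / c ∈ (fun η => η * g η / c) '' Set.Icc 0 v₀ :=
    mem_image_of_mem _ ⟨(hbd z).1.le, (hbd z).2⟩
  have hup z : ψ z * g (ψ z) ≤ c * θp := by
    rw [← div_le_iff₀' hc, hθp]; exact le_csSup hK.bddAbove (hmem z)
  have hlo z : c * θm ≤ ψ z * g (ψ z) := by
    rw [← le_div_iff₀' hc, hθm]; exact csInf_le hK.bddBelow (hmem z)
  have hk : 0 < c / d := div_pos hc hd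
  intro z
  constructor
  · refine le_of_deriv_le_mul_sub_of_bddBelow hk hψ hχ (fun z => ?_) ⟨0, ?_⟩ z
    · rw [div_mul_eq_mul_div, div_le_div_iff_of_pos_right hd]; linarith [hlo z]
    · rintro _ ⟨w, rfl⟩; exact (hbd w).1.le
  · refine le_of_mul_sub_le_deriv_of_bddAbove hk hψ hχ (fun z => ?_) ⟨v₀, ?_⟩ z
    · rw [div_mul_eq_mul_div, div_le_div_iff_of_pos_right hd]; linarith [hup z]
    · rintro _ ⟨w, rfl⟩; exact (hbd w).2

/-- A priori bounds `θ₋ ≤ χ ≤ θ₊` for the derivative component of a bounded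
trajectory of `ψ' = χ`, `dχ' = cχ - ψ g(ψ)`. -/
theorem stmt10 (d c v₀ : ℝ) (hd : 0 < d) (hc : 0 < c) (hv₀ : 0 < v₀)
    (g : ℝ → ℝ) (hg : ContinuousOn g (Set.Icc 0 v₀))
    (ψ χ : ℝ → ℝ)
    (hψ : ∀ z, HasDerivAt ψ (χ z) z)
    (hχ : ∀ z, HasDerivAt χ ((c * χ z - ψ z * g (ψ z)) / d) z)
    (hbd : ∀ z, 0 < ψ z ∧ ψ z ≤ v₀)
    (θp θm : ℝ)
    (hθp : θp = sSup ((fun η => η * g η / c) '' Set.Icc 0 v₀))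
    (hθm : θm = sInf ((fun η => η * g η / c) '' Set.Icc 0 v₀)) :
    ∀ z, θm ≤ χ z ∧ χ z ≤ θp :=
  stmt10_general d c v₀ hd hc g hg ψ χ hψ hχ hbd θp θm hθp hθm
end

section
/- Let f : ℝ → ℝ be differentiable with f' uniformly continuous on ℝ. If f(z) converges to a finite limit as z → -∞, then f'(z) → 0 as z → -∞. -/
/-!
For a fixed step `h > 0`, the mean value inequality gives
`‖f (z + h) - f z - h • f' z‖ ≤ h * ω(h)`, where `ω` is a modulus of uniform continuity of `f'`.
Along a translation-invariant filter the increment `f (z + h) - f z` tends to `0` when `f`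
converges, so `limsup ‖f' z‖ ≤ ω(h)` for every `h > 0`.
-/

open Filter Set Topology

variable {E : Type*} [NormedAddCommGroup E] [NormedSpace ℝ E]

theorem norm_image_sub_sub_smul_le_of_norm_deriv_sub_le {f f' : ℝ → E} {a b C : ℝ}
    (hab : a ≤ b) (hf : ∀ x ∈ Icc a b, HasDerivAt f (f' x) x)
    (bound : ∀ x ∈ Ico a b, ‖f' x - f' a‖ ≤ C) :
    ‖f b - f a - (b - a) • f' a‖ ≤ C * (b - a) := by
  have hg : ∀ x ∈ Icc a b,
      HasDerivWithinAt (fun y ↦ f y - y • f' a) (f' x - f' a) (Icc a b) x := fun x hx ↦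
    ((hf x hx).sub ((hasDerivAt_id x).smul_const (f' a))).hasDerivWithinAt.congr_deriv
      (by simp)
  have := norm_image_sub_le_of_norm_deriv_le_segment' hg bound b (right_mem_Icc.2 hab)
  rwa [show f b - b • f' a - (f a - a • f' a) = f b - f a - (b - a) • f' a by
    rw [sub_smul]; abel] at this

theorem tendsto_deriv_nhds_zero_of_tendsto {l : Filter ℝ} (hl : ∀ h, Tendsto (· + h) l l)
    {f f' : ℝ → E} (hf : ∀ x, HasDerivAt f (f' x) x) (hf' : UniformContinuous f')
    {L : E} (hlim : Tendsto f l (𝓝 L)) :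
    Tendsto f' l (𝓝 0) := by
  rw [NormedAddGroup.tendsto_nhds_zero]
  intro ε hε
  obtain ⟨δ, hδ, hδε⟩ := Metric.uniformContinuous_iff.1 hf' (ε / 2) (half_pos hε)
  set h := δ / 2
  have hh : 0 < h := half_pos hδ
  have hhδ : h < δ := half_lt_self hδ
  have hincr : Tendsto (fun z ↦ f (z + h) - f z) l (𝓝 0) := by
    simpa using (hlim.comp (hl h)).sub hlim
  filter_upwards [NormedAddGroup.tendsto_nhds_zero.1 hincr (ε / 2 * h) (by positivity)]
    with z hz
  have hmvt : ‖f (z + h) - f z - h • f' z‖ ≤ ε / 2 * h := by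
    have := norm_image_sub_sub_smul_le_of_norm_deriv_sub_le (a := z) (b := z + h) (C := ε / 2)
      (le_add_of_nonneg_right hh.le) (fun x _ ↦ hf x) fun x hx ↦ by
        rw [← dist_eq_norm]
        refine (hδε ?_).le
        rw [Real.dist_eq, abs_lt]
        constructor <;> linarith [hx.1, hx.2]
    simpa using this
  have : h * ‖f' z‖ < h * ε := calc
    h * ‖f' z‖ = ‖h • f' z‖ := by rw [norm_smul, Real.norm_of_nonneg hh.le]
    _ ≤ ‖f (z + h) - f z‖ + ‖f (z + h) - f z - h • f' z‖ := norm_le_norm_add_norm_sub _ _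
    _ < ε / 2 * h + ε / 2 * h := add_lt_add_of_lt_of_le hz hmvt
    _ = h * ε := by ring
  exact lt_of_mul_lt_mul_left this hh.le

/-- Barbalat's lemma at `-∞`: if `f` is differentiable with uniformly continuous
derivative and `f` converges as `z → -∞`, then `f'(z) → 0` as `z → -∞`. -/
theorem stmt11 (f f' : ℝ → ℝ)
    (hf : ∀ z, HasDerivAt f (f' z) z)
    (hf' : UniformContinuous f')
    (L : ℝ) (hlim : Filter.Tendsto f Filter.atBot (nhds L)) :
    Filter.Tendsto f' Filter.atBot (nhds 0) :=
  tendsto_deriv_nhds_zero_of_tendsto (fun h ↦ tendsto_atBot_add_const_right _ h tendsto_id)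
    hf hf' hlim
end

section
/- Let d, c > 0, g continuous with g(v)(v - μ) < 0 for v ≠ μ. Suppose (ψ, χ) solves ψ' = χ, dχ' = cχ - ψ g(ψ) on ℝ, ψ is bounded with values in (μ, v₀], ψ is monotone decreasing on (-∞, 0], and χ and χ' are bounded with χ, χ' → 0 as z → -∞. Then L := lim_{z→-∞} ψ(z) exists, L ≥ μ, and g(L) = 0, hence L = μ. In particular, if additionally ψ(0) ≥ μ with strict monotonicity giving L > ψ(0) ≥ μ, a contradiction results, so no such trajectory starting in A₅ = {ψ > μ, χ < 0} exists. -/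
open Filter Set Topology

theorem AntitoneOn.exists_tendsto_atBot_of_bddAbove {α β : Type*} [LinearOrder α]
    [ConditionallyCompleteLinearOrder β] [TopologicalSpace β] [OrderTopology β]
    {f : α → β} {a : α} (hf : AntitoneOn f (Iic a)) (hbdd : BddAbove (f '' Iic a)) :
    ∃ L, Tendsto f atBot (𝓝 L) ∧ f a ≤ L := by
  set f' : α → β := fun z => f (min z a)
  have hanti : Antitone f' := fun x y hxy =>
    hf (min_le_right x a) (min_le_right y a) (min_le_min_right a hxy)
  have hbdd' : BddAbove (range f') :=
    hbdd.mono <| by rintro _ ⟨z, rfl⟩; exact ⟨min z a, min_le_right z a, rfl⟩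
  have heq : f' =ᶠ[atBot] f := by
    filter_upwards [eventually_le_atBot a] with z hz
    simp only [f', min_eq_left hz]
  refine ⟨⨆ z, f' z, (tendsto_atBot_ciSup hanti hbdd').congr' heq, ?_⟩
  simpa [f'] using le_ciSup hbdd' a

theorem stmt12_general (d c μ v₀ : ℝ) (hμ : 0 < μ)
    (g : ℝ → ℝ) (hg : Continuous g)
    (hsign : ∀ v, v ≠ μ → g v * (v - μ) < 0)
    (ψ χ χ' : ℝ → ℝ)
    (heq : ∀ z, d * χ' z = c * χ z - ψ z * g (ψ z))
    (hval : ∀ z, μ < ψ z ∧ ψ z ≤ v₀)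
    (hmono : AntitoneOn ψ (Set.Iic 0))
    (hχ0 : Filter.Tendsto χ Filter.atBot (nhds 0))
    (hχ'0 : Filter.Tendsto χ' Filter.atBot (nhds 0)) :
    False := by
  obtain ⟨L, hψL, hL⟩ := hmono.exists_tendsto_atBot_of_bddAbove
    ⟨v₀, by rintro _ ⟨z, -, rfl⟩; exact (hval z).2⟩
  have hμL : μ < L := (hval 0).1.trans_le hL
  have hforcing : Tendsto (fun z => ψ z * g (ψ z)) atBot (𝓝 0) := by
    have := (hχ0.const_mul c).sub (hχ'0.const_mul d)
    simpa using this.congr fun z => by linarith [heq z]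
  have hLg : L * g L = 0 :=
    tendsto_nhds_unique (((continuous_id.mul hg).tendsto L).comp hψL) hforcing
  have hgL : g L = 0 := (mul_eq_zero.1 hLg).resolve_left (by linarith)
  simpa [hgL] using hsign L hμL.ne'

/-- Exclusion of the region `A₅ = {ψ > μ, χ < 0}`: no trajectory of
`ψ' = χ`, `dχ' = cχ - ψ g(ψ)` with values of `ψ` in `(μ, v₀]`, `ψ` decreasing
on `(-∞, 0]`, and `χ, χ' → 0` at `-∞` can exist. -/
theorem stmt12 (d c μ v₀ : ℝ) (hd : 0 < d) (hc : 0 < c) (hμ : 0 < μ) (hv₀ : μ < v₀)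
    (g : ℝ → ℝ) (hg : Continuous g)
    (hsign : ∀ v, v ≠ μ → g v * (v - μ) < 0)
    (ψ χ χ' : ℝ → ℝ)
    (hψ : ∀ z, HasDerivAt ψ (χ z) z)
    (hχ : ∀ z, HasDerivAt χ (χ' z) z)
    (heq : ∀ z, d * χ' z = c * χ z - ψ z * g (ψ z))
    (hval : ∀ z, μ < ψ z ∧ ψ z ≤ v₀)
    (hmono : AntitoneOn ψ (Set.Iic 0))
    (hbd : ∃ M, ∀ z, |χ z| ≤ M ∧ |χ' z| ≤ M)
    (hχ0 : Filter.Tendsto χ Filter.atBot (nhds 0))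
    (hχ'0 : Filter.Tendsto χ' Filter.atBot (nhds 0)) :
    False :=
  stmt12_general d c μ v₀ hμ g hg hsign ψ χ χ' heq hval hmono hχ0 hχ'0
end

section
/- Let c > 0, m > 0, and let a : ℝ → ℝ be continuous with a(z) ≥ -m for all z. Suppose φ : ℝ → (0,∞) is C² satisfying φ'' - cφ' + a(z)φ = 0, with φ'(z)/φ(z) → 0 as z → -∞. Then |φ'(z)/φ(z)| ≤ (c + √(c²+4m))/2 for all z ∈ ℝ. -/
/-!
Along the solution, `ϖ = φ'/φ` satisfies the Riccati equation `ϖ' = cϖ - a - ϖ²`, hence the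
Riccati inequality `ϖ' ≤ m + cϖ - ϖ²`, whose right-hand side is negative above `π₊` and below
`-π₊`. Above `π₊` the level sets act as barriers crossed only downwards, so a value above `π₊`
could not be reached from `-∞`, where `ϖ → 0`. Below `-π₊`, `ϖ` keeps decreasing and eventually
`ϖ' ≤ -ε ϖ²`, which forces blow-up in finite time, impossible for a global solution.
-/

open Set Filter Topology

theorem le_of_hasDerivAt_neg_at_level {f f' : ℝ → ℝ} {a L : ℝ}
    (hf : ∀ x ≥ a, HasDerivAt f (f' x) x) (ha : f a ≤ L)
    (hL : ∀ x ≥ a, f x = L → f' x < 0) : ∀ x ≥ a, f x ≤ L := by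
  intro x hx
  refine image_le_of_deriv_right_lt_deriv_boundary (B := fun _ => L) (B' := fun _ => 0)
    (fun y hy => (hf y hy.1).continuousAt.continuousWithinAt)
    (fun y hy => (hf y hy.1).hasDerivWithinAt) ha (fun _ => hasDerivAt_const _ _)
    (fun y hy => hL y hy.1) ⟨hx, le_rfl⟩

theorem le_of_tendsto_atBot_of_hasDerivAt_neg_above {f f' : ℝ → ℝ} {l P : ℝ}
    (hf : ∀ x, HasDerivAt f (f' x) x) (hlim : Tendsto f atBot (𝓝 l)) (hlP : l ≤ P)
    (hneg : ∀ x, P < f x → f' x < 0) (x : ℝ) : f x ≤ P := by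
  by_contra! hx
  obtain ⟨L, hPL, hLx⟩ := exists_between hx
  obtain ⟨N, hN⟩ := eventually_atBot.mp (hlim.eventually_lt_const (hlP.trans_lt hPL))
  have hbarrier := le_of_hasDerivAt_neg_at_level (a := min N x) (L := L) (fun y _ => hf y)
    (hN _ (min_le_left _ _)).le (fun y _ hy => hneg y (by linarith)) x (min_le_right _ _)
  linarith

theorem exists_nonneg_of_hasDerivAt_le_neg_mul_sq {f f' : ℝ → ℝ} {a ε : ℝ} (hε : 0 < ε)
    (hf : ∀ x ≥ a, HasDerivAt f (f' x) x) (hf' : ∀ x ≥ a, f' x ≤ -ε * f x ^ 2) :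
    ∃ x ≥ a, 0 ≤ f x := by
  by_contra! hneg
  -- `1/f - εx` is nondecreasing, so `1/f` would reach `0` at time `a - 1/(ε f a)`.
  have hderiv : ∀ x ≥ a,
      HasDerivAt (fun x => (f x)⁻¹ - ε * x) (-f' x / f x ^ 2 - ε) x := fun x hx =>
    (((hf x hx).inv (hneg x hx).ne).sub ((hasDerivAt_id' x).const_mul ε)).congr_deriv (by ring)
  have hderiv_nonneg : ∀ x ≥ a, 0 ≤ -f' x / f x ^ 2 - ε := fun x hx => by
    rw [sub_nonneg, le_div_iff₀ (sq_pos_of_ne_zero (hneg x hx).ne)]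
    linarith [hf' x hx]
  have hmono : MonotoneOn (fun x => (f x)⁻¹ - ε * x) (Ici a) :=
    monotoneOn_of_hasDerivWithinAt_nonneg (convex_Ici a)
      (fun x hx => (hderiv x hx).continuousAt.continuousWithinAt)
      (fun x hx => (hderiv x (interior_subset hx)).hasDerivWithinAt)
      (fun x hx => hderiv_nonneg x (interior_subset hx))
  have ha := hneg a le_rfl
  have hab : a ≤ a - (ε * f a)⁻¹ := by
    linarith [inv_lt_zero.mpr (mul_neg_of_pos_of_neg hε ha)]
  have hle := hmono self_mem_Ici hab hab
  have hb := inv_lt_zero.mpr (hneg _ hab)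
  have : ε * (ε * f a)⁻¹ = (f a)⁻¹ := by field_simp
  simp only at hle
  nlinarith

theorem hasDerivAt_div_of_linear_ode {φ φ' : ℝ → ℝ} {z c a φ'' : ℝ} (hz : φ z ≠ 0)
    (hφ : HasDerivAt φ (φ' z) z) (hφ' : HasDerivAt φ' φ'' z)
    (hode : φ'' - c * φ' z + a * φ z = 0) :
    HasDerivAt (fun x => φ' x / φ x) (c * (φ' z / φ z) - a - (φ' z / φ z) ^ 2) z :=
  (hφ'.div hφ hz).congr_deriv (by field_simp; linear_combination φ z * hode)

/-- The larger root `π₊` of `x² - cx - m`. -/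
noncomputable def piPlus (c m : ℝ) : ℝ := (c + √(c ^ 2 + 4 * m)) / 2

section piPlus

variable {c m x : ℝ}

theorem piPlus_sq (hm : 0 ≤ c ^ 2 + 4 * m) : piPlus c m ^ 2 = c * piPlus c m + m := by
  have := Real.sq_sqrt hm
  unfold piPlus
  linear_combination this / 4

theorem piPlus_nonneg (hm : 0 ≤ m) : 0 ≤ piPlus c m := by
  have : |c| ≤ √(c ^ 2 + 4 * m) := by
    rw [← Real.sqrt_sq_eq_abs]
    exact Real.sqrt_le_sqrt (by linarith)
  unfold piPlus
  linarith [neg_abs_le c]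

theorem add_mul_sub_sq_neg_of_piPlus_lt (hm : 0 ≤ c ^ 2 + 4 * m) (hx : piPlus c m < x) :
    m + c * x - x ^ 2 < 0 := by
  have hsqrt : c ≤ 2 * piPlus c m := by unfold piPlus; linarith [Real.sqrt_nonneg (c ^ 2 + 4 * m)]
  nlinarith [piPlus_sq hm, mul_pos (sub_pos.mpr hx) (by linarith : 0 < x - c + piPlus c m)]

theorem add_mul_sub_sq_neg_of_lt_neg_piPlus (hc : 0 ≤ c) (hm : 0 ≤ c ^ 2 + 4 * m)
    (hx : x < -piPlus c m) : m + c * x - x ^ 2 < 0 := by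
  have hP : 0 ≤ piPlus c m := by unfold piPlus; positivity
  nlinarith [piPlus_sq hm, mul_pos_of_neg_of_neg (by linarith : x - piPlus c m < 0)
    (by linarith : x - c + piPlus c m < 0)]

theorem neg_piPlus_le_of_riccati {W W' : ℝ → ℝ} (hc : 0 ≤ c) (hm : 0 ≤ m)
    (hW : ∀ x, HasDerivAt W (W' x) x) (hW' : ∀ x, W' x ≤ m + c * W x - W x ^ 2) (z : ℝ) :
    -piPlus c m ≤ W z := by
  by_contra! hz
  have hm4 : 0 ≤ c ^ 2 + 4 * m := by positivity
  have hdecr : ∀ x ≥ z, W x ≤ W z := le_of_hasDerivAt_neg_at_level (fun x _ => hW x) le_rfl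
    fun x _ hx => (hW' x).trans_lt (add_mul_sub_sq_neg_of_lt_neg_piPlus hc hm4 (hx ▸ hz))
  have hWz : W z < 0 := hz.trans_le (neg_nonpos.mpr (piPlus_nonneg hm))
  have hm_lt : m < W z ^ 2 := by
    nlinarith [piPlus_sq hm4, piPlus_nonneg (c := c) hm]
  have hWz2 : 0 < W z ^ 2 := hm.trans_lt hm_lt
  obtain ⟨x, hx, hWx⟩ := exists_nonneg_of_hasDerivAt_le_neg_mul_sq
    (f := W) (a := z) (ε := (W z ^ 2 - m) / W z ^ 2) (div_pos (by linarith) hWz2)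
    (fun x _ => hW x) fun x hx => by
      have hsq : W z ^ 2 ≤ W x ^ 2 := by nlinarith [hdecr x hx]
      have hm_le : m ≤ m * W x ^ 2 / W z ^ 2 := by
        rw [le_div_iff₀ hWz2]
        exact mul_le_mul_of_nonneg_left hsq hm
      have hε : -((W z ^ 2 - m) / W z ^ 2) * W x ^ 2 = m * W x ^ 2 / W z ^ 2 - W x ^ 2 := by
        field_simp [hWz.ne]
        ring
      nlinarith [hW' x, hdecr x hx]
  linarith [hdecr x hx]

end piPlus

theorem stmt17_general (c m : ℝ) (hc : 0 < c) (hm : 0 < m)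
    (a : ℝ → ℝ) (ham : ∀ z, -m ≤ a z)
    (φ φ' φ'' : ℝ → ℝ)
    (hpos : ∀ z, 0 < φ z)
    (hφ' : ∀ z, HasDerivAt φ (φ' z) z)
    (hφ'' : ∀ z, HasDerivAt φ' (φ'' z) z)
    (hode : ∀ z, φ'' z - c * φ' z + a z * φ z = 0)
    (hlim : Filter.Tendsto (fun z => φ' z / φ z) Filter.atBot (nhds 0)) :
    ∀ z, |φ' z / φ z| ≤ (c + Real.sqrt (c ^ 2 + 4 * m)) / 2 := by
  set W := fun z => φ' z / φ z
  have hW : ∀ z, HasDerivAt W (c * W z - a z - W z ^ 2) z := fun z =>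
    hasDerivAt_div_of_linear_ode (hpos z).ne' (hφ' z) (hφ'' z) (hode z)
  have hW' : ∀ z, c * W z - a z - W z ^ 2 ≤ m + c * W z - W z ^ 2 := fun z => by
    linarith [ham z]
  have hupper : ∀ z, W z ≤ piPlus c m :=
    le_of_tendsto_atBot_of_hasDerivAt_neg_above hW hlim (piPlus_nonneg hm.le) fun z hz =>
      (hW' z).trans_lt (add_mul_sub_sq_neg_of_piPlus_lt (by positivity) hz)
  exact fun z => abs_le.mpr ⟨neg_piPlus_le_of_riccati hc.le hm.le hW hW' z, hupper z⟩

/-- A priori bound on the logarithmic derivative: if `a ≥ -m`, `φ > 0` solves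
`φ'' - cφ' + a(z)φ = 0` and `φ'/φ → 0` at `-∞`, then
`|φ'/φ| ≤ (c + √(c²+4m))/2` on `ℝ`. -/
theorem stmt17 (c m : ℝ) (hc : 0 < c) (hm : 0 < m)
    (a : ℝ → ℝ) (ha : Continuous a) (ham : ∀ z, -m ≤ a z)
    (φ φ' φ'' : ℝ → ℝ)
    (hpos : ∀ z, 0 < φ z)
    (hφ' : ∀ z, HasDerivAt φ (φ' z) z)
    (hφ'' : ∀ z, HasDerivAt φ' (φ'' z) z)
    (hode : ∀ z, φ'' z - c * φ' z + a z * φ z = 0)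
    (hlim : Filter.Tendsto (fun z => φ' z / φ z) Filter.atBot (nhds 0)) :
    ∀ z, |φ' z / φ z| ≤ (c + Real.sqrt (c ^ 2 + 4 * m)) / 2 :=
  stmt17_general c m hc hm a ham φ φ' φ'' hpos hφ' hφ'' hode hlim
end
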